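/- Within-group merging lemma for complete-linkage HAC under separation: Let n ≥ 1 be an integer, d : {1,…,n}² → ℝ symmetric, and let {G₁,…,G_{K₀}} be a partition of {1,…,n} into K₀ nonempty groups that is d-separated. Then, for every choice of tie-breaking at each step and for every step r with 1 ≤ r ≤ n − K₀, the two clusters merged at step r of the HAC algorithm are both subsets of one and the same group G_k; consequently, for every r with 0 ≤ r ≤ n − K₀, each cluster of the partition P^r is contained in some group G_k. -/

import Mathlib

open Finset

/-- Complete-linkage dissimilarity `Δ(S,S') = max_{i ∈ S, j ∈ S'} d i j`, as an
extended real (so that the value over an empty index set is `⊥`). -/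
noncomputable def cLink {n : ℕ} (d : Fin n → Fin n → ℝ) (S S' : Finset (Fin n)) : EReal :=
  sSup {x : EReal | ∃ i ∈ S, ∃ j ∈ S', x = (d i j : EReal)}

/-- Within-cluster dissimilarity `Δ(C) = max_{i,j ∈ C, i ≠ j} d i j`, as an extended real;
for a singleton (or empty) cluster the value is `⊥`, which is smaller than every real. -/
noncomputable def cDiam {n : ℕ} (d : Fin n → Fin n → ℝ) (C : Finset (Fin n)) : EReal :=
  sSup {x : EReal | ∃ i ∈ C, ∃ j ∈ C, i ≠ j ∧ x = (d i j : EReal)}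

/-- The initial partition of `{1,…,n}` into `n` singleton clusters. -/
def singletonPartition (n : ℕ) : Finset (Finset (Fin n)) :=
  Finset.univ.image fun i : Fin n => ({i} : Finset (Fin n))

/-- `Q` is obtained from `P` by merging one pair of distinct clusters attaining the
minimum of the complete-linkage dissimilarity `Δ` over all pairs of distinct clusters. -/
def IsMergeStep {n : ℕ} (d : Fin n → Fin n → ℝ) (P Q : Finset (Finset (Fin n))) : Prop :=
  ∃ C ∈ P, ∃ C' ∈ P, C ≠ C' ∧
    (∀ D ∈ P, ∀ D' ∈ P, D ≠ D' → cLink d C C' ≤ cLink d D D') ∧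
    Q = insert (C ∪ C') ((P.erase C).erase C')

/-- A run of the complete-linkage HAC algorithm (with an arbitrary choice of
tie-breaking at each step): `P 0` is the singleton partition and for every
`r < n - 1`, `P (r+1)` is obtained from `P r` by a merge step. -/
def IsHACChain {n : ℕ} (d : Fin n → Fin n → ℝ) (P : ℕ → Finset (Finset (Fin n))) : Prop :=
  P 0 = singletonPartition n ∧ ∀ r, r < n - 1 → IsMergeStep d (P r) (P (r + 1))

/-- `G` is a partition of `{1,…,n}` into `K₀` nonempty groups. -/
def IsGroupPartition {n K₀ : ℕ} (G : Fin K₀ → Finset (Fin n)) : Prop :=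
  (∀ k, (G k).Nonempty) ∧ (∀ i : Fin n, ∃ k, i ∈ G k) ∧
    ∀ k k' : Fin K₀, k ≠ k' → Disjoint (G k) (G k')

/-- The partition `G` is `d`-separated: every within-group distance is strictly smaller
than every between-group distance (vacuously true when `K₀ = 1`). -/
def IsSeparated {n K₀ : ℕ} (d : Fin n → Fin n → ℝ) (G : Fin K₀ → Finset (Fin n)) : Prop :=
  ∀ k : Fin K₀, ∀ i ∈ G k, ∀ j ∈ G k, i ≠ j →
    ∀ k₁ k₂ : Fin K₀, k₁ ≠ k₂ → ∀ a ∈ G k₁, ∀ b ∈ G k₂, d i j < d a b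

/-- `A` is a refinement of `B`: every element of `A` is a subset of some element of `B`. -/
def IsRefinement {n : ℕ} (A B : Finset (Finset (Fin n))) : Prop :=
  ∀ C ∈ A, ∃ D ∈ B, C ⊆ D

/-!
While every cluster lies inside a group and there are more clusters than groups, the pigeonhole
principle yields two distinct clusters inside one group; by separation their linkage is below any
linkage between clusters of different groups. A minimal pair therefore lies inside one group, so
merging it keeps every cluster inside a group. After `r` merges there are `n - r` clusters, so
this persists up to step `n - K₀`.
-/

lemma exists_ne_subset_same_of_card_lt {α ι : Type*} [Fintype ι] {G : ι → Finset α}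
    {A : Finset (Finset α)} (h : ∀ C ∈ A, ∃ k, C ⊆ G k) (hcard : Fintype.card ι < A.card) :
    ∃ D ∈ A, ∃ D' ∈ A, D ≠ D' ∧ ∃ k, D ⊆ G k ∧ D' ⊆ G k := by
  choose f hf using h
  obtain ⟨⟨D, hD⟩, ⟨D', hD'⟩, hne, hfD⟩ :=
    Fintype.exists_ne_map_eq_of_card_lt (fun C : A => f C C.2)
      (by rwa [Fintype.card_coe])
  exact ⟨D, hD, D', hD', fun h => hne (Subtype.ext h), f D hD, hf D hD, hfD ▸ hf D' hD'⟩

section Clustering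

variable {α : Type*} [DecidableEq α]

def IsClustering (P : Finset (Finset α)) : Prop :=
  (∀ C ∈ P, C.Nonempty) ∧ (P : Set (Finset α)).PairwiseDisjoint id

def mergeClusters (P : Finset (Finset α)) (C C' : Finset α) : Finset (Finset α) :=
  insert (C ∪ C') ((P.erase C).erase C')

lemma mem_mergeClusters {P : Finset (Finset α)} {C C' D : Finset α} :
    D ∈ mergeClusters P C C' ↔ D = C ∪ C' ∨ D ≠ C' ∧ D ≠ C ∧ D ∈ P := by
  simp only [mergeClusters, mem_insert, mem_erase]

namespace IsClustering

variable {P : Finset (Finset α)} {C C' : Finset α}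

lemma mergeClusters (hP : IsClustering P) (hC : C ∈ P) (hC' : C' ∈ P) :
    IsClustering (_root_.mergeClusters P C C') := by
  obtain ⟨hne, hdisj⟩ := hP
  have hrest : ∀ D ∈ (P.erase C).erase C', D ≠ C' ∧ D ≠ C ∧ D ∈ P := by
    simp only [mem_erase]; exact fun _ h => h
  refine ⟨fun D hD => ?_, ?_⟩
  · rcases mem_mergeClusters.mp hD with rfl | ⟨-, -, hD⟩
    · exact (hne C hC).mono subset_union_left
    · exact hne D hD
  · rw [_root_.mergeClusters, coe_insert]
    refine (hdisj.subset fun D hD => (hrest D hD).2.2).insert fun D hD _ => ?_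
    obtain ⟨hDC', hDC, hD⟩ := hrest D hD
    exact disjoint_union_left.mpr ⟨hdisj hC hD hDC.symm, hdisj hC' hD hDC'.symm⟩

lemma card_mergeClusters (hP : IsClustering P) (hC : C ∈ P) (hC' : C' ∈ P) (hCC' : C ≠ C') :
    (_root_.mergeClusters P C C').card + 1 = P.card := by
  have hnotMem : C ∪ C' ∉ (P.erase C).erase C' := by
    simp only [mem_erase, not_and]
    intro _ hCC hmem
    obtain ⟨i, hi⟩ := hP.1 C hC
    exact disjoint_left.mp (hP.2 hC hmem (Ne.symm hCC)) hi (mem_union_left C' hi)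
  have hC'erase : C' ∈ P.erase C := mem_erase.mpr ⟨hCC'.symm, hC'⟩
  have hpos : 0 < (P.erase C).card := card_pos.mpr ⟨C', hC'erase⟩
  rw [_root_.mergeClusters, card_insert_of_notMem hnotMem, card_erase_of_mem hC'erase,
    card_erase_of_mem hC] at *
  omega

end IsClustering

end Clustering

lemma isClustering_singletonPartition (n : ℕ) : IsClustering (singletonPartition n) := by
  simp only [IsClustering, singletonPartition, mem_image, mem_univ, true_and, coe_image,
    coe_univ, Set.image_univ, forall_exists_index, forall_apply_eq_imp_iff]
  refine ⟨fun i => singleton_nonempty i, ?_⟩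
  rintro _ ⟨i, rfl⟩ _ ⟨j, rfl⟩ hij
  exact disjoint_singleton.mpr fun h => hij (h ▸ rfl)

lemma card_singletonPartition (n : ℕ) : (singletonPartition n).card = n := by
  rw [singletonPartition, card_image_of_injective _ singleton_injective, card_univ,
    Fintype.card_fin]

section Linkage

variable {n : ℕ} (d : Fin n → Fin n → ℝ)

lemma le_cLink {S S' : Finset (Fin n)} {i j : Fin n} (hi : i ∈ S) (hj : j ∈ S') :
    (d i j : EReal) ≤ cLink d S S' :=
  le_sSup ⟨i, hi, j, hj, rfl⟩

lemma exists_cLink_eq {S S' : Finset (Fin n)} (hS : S.Nonempty) (hS' : S'.Nonempty) :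
    ∃ i ∈ S, ∃ j ∈ S', cLink d S S' = (d i j : EReal) := by
  have hfin : {x : EReal | ∃ i ∈ S, ∃ j ∈ S', x = (d i j : EReal)}.Finite :=
    (Set.finite_range fun p : Fin n × Fin n => (d p.1 p.2 : EReal)).subset
      fun _ ⟨i, _, j, _, hx⟩ => ⟨(i, j), hx.symm⟩
  obtain ⟨i, hi⟩ := hS
  obtain ⟨j, hj⟩ := hS'
  have hne : {x : EReal | ∃ i ∈ S, ∃ j ∈ S', x = (d i j : EReal)}.Nonempty :=
    ⟨_, i, hi, j, hj, rfl⟩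
  exact hne.csSup_mem hfin

end Linkage

namespace IsSeparated

variable {n K₀ : ℕ} {d : Fin n → Fin n → ℝ} {G : Fin K₀ → Finset (Fin n)}

lemma cLink_lt_cLink (hsep : IsSeparated d G) {D D' C C' : Finset (Fin n)} {k k₁ k₂ : Fin K₀}
    (hD : D ⊆ G k) (hD' : D' ⊆ G k) (hDne : D.Nonempty) (hD'ne : D'.Nonempty)
    (hDD' : Disjoint D D') (hC : C ⊆ G k₁) (hC' : C' ⊆ G k₂) (hk : k₁ ≠ k₂)
    (hCne : C.Nonempty) (hC'ne : C'.Nonempty) :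
    cLink d D D' < cLink d C C' := by
  obtain ⟨i, hi, j, hj, hlink⟩ := exists_cLink_eq d hDne hD'ne
  obtain ⟨a, ha⟩ := hCne
  obtain ⟨b, hb⟩ := hC'ne
  have hij : i ≠ j := by rintro rfl; exact disjoint_left.mp hDD' hi hj
  calc cLink d D D' = (d i j : EReal) := hlink
    _ < (d a b : EReal) := EReal.coe_lt_coe_iff.mpr <|
        hsep k i (hD hi) j (hD' hj) hij k₁ k₂ hk a (hC ha) b (hC' hb)
    _ ≤ cLink d C C' := le_cLink d ha hb

variable {P : Finset (Finset (Fin n))} {C C' : Finset (Fin n)}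

lemma exists_group_of_minimal (hsep : IsSeparated d G) (hP : IsClustering P)
    (hwithin : ∀ D ∈ P, ∃ k, D ⊆ G k) (hcard : K₀ < P.card) (hC : C ∈ P) (hC' : C' ∈ P)
    (hmin : ∀ D ∈ P, ∀ D' ∈ P, D ≠ D' → cLink d C C' ≤ cLink d D D') :
    ∃ k, C ⊆ G k ∧ C' ⊆ G k := by
  obtain ⟨k₁, hCk₁⟩ := hwithin C hC
  obtain ⟨k₂, hC'k₂⟩ := hwithin C' hC'
  obtain rfl | hk := eq_or_ne k₁ k₂
  · exact ⟨k₁, hCk₁, hC'k₂⟩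
  obtain ⟨D, hD, D', hD', hDD', k, hDk, hD'k⟩ :=
    exists_ne_subset_same_of_card_lt hwithin (by rwa [Fintype.card_fin])
  have hlt : cLink d D D' < cLink d C C' :=
    hsep.cLink_lt_cLink hDk hD'k (hP.1 D hD) (hP.1 D' hD') (hP.2 hD hD' hDD') hCk₁ hC'k₂ hk
      (hP.1 C hC) (hP.1 C' hC')
  exact absurd (hmin D hD D' hD' hDD') hlt.not_ge

end IsSeparated

namespace IsHACChain

variable {n K₀ : ℕ} {d : Fin n → Fin n → ℝ} {P : ℕ → Finset (Finset (Fin n))}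

lemma isClustering_and_card (hP : IsHACChain d P) :
    ∀ r < n, IsClustering (P r) ∧ (P r).card = n - r
  | 0, _ => by
    rw [hP.1]
    exact ⟨isClustering_singletonPartition n, card_singletonPartition n⟩
  | r + 1, hr => by
    obtain ⟨hclust, hcard⟩ := isClustering_and_card hP r (by omega)
    obtain ⟨C, hC, C', hC', hCC', -, hmerge⟩ := hP.2 r (by omega)
    change P (r + 1) = mergeClusters (P r) C C' at hmerge
    have hcard' := hclust.card_mergeClusters hC hC' hCC'
    rw [hmerge]
    exact ⟨hclust.mergeClusters hC hC', by omega⟩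

lemma forall_subset_group (hP : IsHACChain d P) {G : Fin K₀ → Finset (Fin n)}
    (hcover : ∀ i, ∃ k, i ∈ G k) (hsep : IsSeparated d G) :
    ∀ r ≤ n - K₀, ∀ C ∈ P r, ∃ k, C ⊆ G k
  | 0, _ => by
    simp only [hP.1, singletonPartition, mem_image, mem_univ, true_and, forall_exists_index,
      forall_apply_eq_imp_iff, singleton_subset_iff]
    exact hcover
  | r + 1, hr => by
    have hrn : r < n := by omega
    have hK₀ : 0 < K₀ := (hcover ⟨r, hrn⟩).choose.pos
    have hwithin := forall_subset_group hP hcover hsep r (by omega)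
    obtain ⟨hclust, hcard⟩ := hP.isClustering_and_card r hrn
    obtain ⟨C, hC, C', hC', -, hmin, hmerge⟩ := hP.2 r (by omega)
    obtain ⟨k, hCk, hC'k⟩ :=
      hsep.exists_group_of_minimal hclust hwithin (by omega) hC hC' hmin
    intro D hD
    rcases mem_mergeClusters.mp (hmerge ▸ hD) with rfl | ⟨-, -, hD⟩
    · exact ⟨k, union_subset hCk hC'k⟩
    · exact hwithin D hD

end IsHACChain

theorem hac_within_group_merging_general {n K₀ : ℕ}
    (d : Fin n → Fin n → ℝ)
    (G : Fin K₀ → Finset (Fin n)) (hG : IsGroupPartition G)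
    (hsep : IsSeparated d G)
    (P : ℕ → Finset (Finset (Fin n))) (hP : IsHACChain d P) :
    (∀ r, 1 ≤ r → r ≤ n - K₀ →
        ∀ C ∈ P (r - 1), ∀ C' ∈ P (r - 1), C ≠ C' →
          P r = insert (C ∪ C') (((P (r - 1)).erase C).erase C') →
          ∃ k, C ⊆ G k ∧ C' ⊆ G k) ∧
      ∀ r, r ≤ n - K₀ → ∀ C ∈ P r, ∃ k, C ⊆ G k := by
  have hwithin := hP.forall_subset_group hG.2.1 hsep
  refine ⟨fun r _ hr C _ C' _ _ hmerge => ?_, hwithin⟩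
  obtain ⟨k, hk⟩ := hwithin r hr (C ∪ C') (hmerge ▸ mem_insert_self _ _)
  exact ⟨k, subset_union_left.trans hk, subset_union_right.trans hk⟩

/-- **Within-group merging lemma.** If the group partition is `d`-separated, then for every
tie-breaking: at every step `r` with `1 ≤ r ≤ n − K₀`, the two clusters merged at step `r`
are both subsets of one and the same group `G k`; consequently, for every `r ≤ n − K₀`,
each cluster of the partition `P r` is contained in some group `G k`. -/
theorem hac_within_group_merging {n K₀ : ℕ} (hn : 1 ≤ n)
    (d : Fin n → Fin n → ℝ) (hsym : ∀ i j, d i j = d j i)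
    (G : Fin K₀ → Finset (Fin n)) (hG : IsGroupPartition G)
    (hsep : IsSeparated d G)
    (P : ℕ → Finset (Finset (Fin n))) (hP : IsHACChain d P) :
    (∀ r, 1 ≤ r → r ≤ n - K₀ →
        ∀ C ∈ P (r - 1), ∀ C' ∈ P (r - 1), C ≠ C' →
          P r = insert (C ∪ C') (((P (r - 1)).erase C).erase C') →
          ∃ k, C ⊆ G k ∧ C' ⊆ G k) ∧
      ∀ r, r ≤ n - K₀ → ∀ C ∈ P r, ∃ k, C ⊆ G k :=
  hac_within_group_merging_general d G hG hsep P hP
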